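/- For every real s > 1 and every x ∈ (0, π), the Clausen function S_s(x) = ∑_{n=1}^{∞} sin(n x)/n^s is strictly positive: ∑_{n=1}^{∞} sin(n x)/n^s > 0. -/

import Mathlib

/-!
For `t > 0` and `z = e^{-t+ix}`, `∑ₙ e^{-nt} sin(nx) = Im (z / (1 - z)) = e^{-t} sin x / |1 - z|²`,
which is positive when `0 < x < π`. Integrating against `t^(s-1)` term by term, with
`∫₀^∞ t^(s-1) e^{-nt} dt = Γ(s) / n^s`, gives
`Γ(s) S_s(x) = ∫₀^∞ t^(s-1) e^{-t} sin x / |1 - z|² dt > 0`.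
The interchange, and the integrability of the right-hand side, both come from the summability of
`∫₀^∞ |t^(s-1) e^{-nt} sin(nx)| dt = Γ(s) |sin(nx)| / n^s`.
-/

open MeasureTheory Set Filter Complex
open scoped ENNReal Real

namespace MeasureTheory

variable {α E : Type*} [MeasurableSpace α] {μ : Measure α} [NormedAddCommGroup E]

theorem Integrable.of_hasSum_of_summable_integral_norm {F : ℕ → α → E} {f : α → E}
    (hF_int : ∀ n, Integrable (F n) μ) (hF_sum : Summable fun n ↦ ∫ a, ‖F n a‖ ∂μ)
    (hf : ∀ᵐ a ∂μ, HasSum (F · a) (f a)) : Integrable f μ := by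
  refine ⟨aestronglyMeasurable_of_tendsto_ae atTop
    (fun n ↦ Finset.aestronglyMeasurable_fun_sum _ fun i _ ↦ (hF_int i).1)
    (hf.mono fun a ha ↦ ha.tendsto_sum_nat), ?_⟩
  calc ∫⁻ a, ‖f a‖ₑ ∂μ ≤ ∫⁻ a, ∑' n, ‖F n a‖ₑ ∂μ :=
        lintegral_mono_ae (hf.mono fun a ha ↦ ha.tsum_eq ▸ enorm_tsum_le_tsum_enorm)
    _ = ∑' n, ENNReal.ofReal (∫ a, ‖F n a‖ ∂μ) := by
        rw [lintegral_tsum fun n ↦ (hF_int n).1.enorm]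
        simp_rw [ofReal_integral_norm_eq_lintegral_enorm (hF_int _)]
    _ = ENNReal.ofReal (∑' n, ∫ a, ‖F n a‖ ∂μ) :=
        (ENNReal.ofReal_tsum_of_nonneg (fun n ↦ integral_nonneg fun a ↦ norm_nonneg _) hF_sum).symm
    _ < ∞ := ENNReal.ofReal_lt_top

theorem setIntegral_pos_of_forall_pos {f : α → ℝ} {s : Set α} (hs : MeasurableSet s)
    (hμs : μ s ≠ 0) (hfi : IntegrableOn f s μ) (hf : ∀ a ∈ s, 0 < f a) :
    0 < ∫ a in s, f a ∂μ := by
  rw [setIntegral_pos_iff_support_of_nonneg_ae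
    (ae_restrict_of_forall_mem hs fun a ha ↦ (hf a ha).le) hfi]
  exact (pos_iff_ne_zero.mpr hμs).trans_le
    (measure_mono fun a ha ↦ ⟨(hf a ha).ne', ha⟩)

end MeasureTheory

section MellinDirichlet

variable {s c : ℝ}

theorem integrableOn_rpow_mul_exp_neg_mul (hs : 0 < s) (hc : 0 < c) :
    IntegrableOn (fun t ↦ t ^ (s - 1) * rexp (-(c * t))) (Ioi 0) := by
  simpa [Real.rpow_one] using
    integrableOn_rpow_mul_exp_neg_mul_rpow (s := s - 1) (by linarith) one_pos hc

theorem integral_rpow_mul_const_mul_exp_neg_mul (hs : 0 < s) (hc : 0 < c) (A : ℝ) :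
    ∫ t in Ioi 0, t ^ (s - 1) * (A * rexp (-(c * t))) = Real.Gamma s * A / c ^ s := by
  simp_rw [mul_left_comm _ A, integral_const_mul, Real.integral_rpow_mul_exp_neg_mul_Ioi hs hc,
    Real.div_rpow zero_le_one hc.le, Real.one_rpow]
  ring

variable {a : ℕ → ℝ} {K : ℝ → ℝ}

theorem integrableOn_rpow_mul_const_mul_exp_nat (hs : 0 < s) (n : ℕ) :
    IntegrableOn (fun t ↦ t ^ (s - 1) * (a n * rexp (-((n + 1) * t)))) (Ioi 0) :=
  IntegrableOn.congr_fun ((integrableOn_rpow_mul_exp_neg_mul hs n.cast_add_one_pos).const_mul (a n))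
    (fun _ _ ↦ mul_left_comm _ _ _) measurableSet_Ioi

theorem summable_integral_norm_rpow_mul_const_mul_exp_nat (hs : 0 < s)
    (ha : Summable fun n ↦ |a n| / (n + 1) ^ s) :
    Summable fun n : ℕ ↦ ∫ t in Ioi 0, ‖t ^ (s - 1) * (a n * rexp (-((n + 1) * t)))‖ := by
  refine (ha.mul_left (Real.Gamma s)).congr fun n ↦ ?_
  rw [← mul_div_assoc, ← integral_rpow_mul_const_mul_exp_neg_mul hs n.cast_add_one_pos]
  refine setIntegral_congr_fun measurableSet_Ioi fun t (ht : 0 < t) ↦ ?_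
  rw [Real.norm_eq_abs, abs_mul, abs_mul, abs_of_pos (Real.rpow_pos_of_pos ht _),
    abs_of_pos (Real.exp_pos _)]

theorem integrableOn_rpow_mul_of_hasSum_exp (hs : 0 < s)
    (hK : ∀ t > 0, HasSum (fun n ↦ a n * rexp (-((n + 1) * t))) (K t))
    (ha : Summable fun n ↦ |a n| / (n + 1) ^ s) :
    IntegrableOn (fun t ↦ t ^ (s - 1) * K t) (Ioi 0) :=
  Integrable.of_hasSum_of_summable_integral_norm
    (integrableOn_rpow_mul_const_mul_exp_nat hs)
    (summable_integral_norm_rpow_mul_const_mul_exp_nat hs ha)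
    (ae_restrict_of_forall_mem measurableSet_Ioi fun t ht ↦ (hK t ht).mul_left _)

theorem hasSum_integral_rpow_mul_of_hasSum_exp (hs : 0 < s)
    (hK : ∀ t > 0, HasSum (fun n ↦ a n * rexp (-((n + 1) * t))) (K t))
    (ha : Summable fun n ↦ |a n| / (n + 1) ^ s) :
    HasSum (fun n : ℕ ↦ Real.Gamma s * a n / (n + 1) ^ s) (∫ t in Ioi 0, t ^ (s - 1) * K t) := by
  have h := hasSum_integral_of_summable_integral_norm
    (integrableOn_rpow_mul_const_mul_exp_nat hs)
    (summable_integral_norm_rpow_mul_const_mul_exp_nat hs ha)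
  rwa [funext fun n : ℕ ↦ integral_rpow_mul_const_mul_exp_neg_mul hs n.cast_add_one_pos (a n),
    setIntegral_congr_fun measurableSet_Ioi fun t ht ↦ ((hK t ht).mul_left (t ^ (s - 1))).tsum_eq]
    at h

end MellinDirichlet

theorem Complex.hasSum_im_pow_succ {z : ℂ} (hz : ‖z‖ < 1) :
    HasSum (fun n : ℕ ↦ (z ^ (n + 1)).im) (z.im / normSq (1 - z)) := by
  have hz1 : 1 - z ≠ 0 := fun h ↦ by simp [← sub_eq_zero.mp h] at hz
  convert hasSum_im ((hasSum_geometric_of_norm_lt_one hz).mul_left z) using 1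
  · ext n; rw [pow_succ']
  · rw [← div_eq_mul_inv, div_im]
    field_simp
    simp
    ring

theorem Complex.exp_neg_add_mul_I_pow_im (t x : ℝ) (n : ℕ) :
    (cexp (-t + x * I) ^ n).im = rexp (-(n * t)) * Real.sin (n * x) := by
  rw [← Complex.exp_nat_mul, exp_im]
  simp

theorem Complex.norm_exp_neg_add_mul_I_lt_one {t : ℝ} (ht : 0 < t) (x : ℝ) :
    ‖cexp (-t + x * I)‖ < 1 := by
  simpa [norm_exp] using ht

/-- Since `e^{-t} / |1 - e^{-t+ix}|² = e^t / ((e^t - cos x)² + sin² x)`, this is the paper's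
integrand without the factor `t^(s-1)`. -/
noncomputable def clausenKernel (x t : ℝ) : ℝ :=
  rexp (-t) * Real.sin x / normSq (1 - cexp (-t + x * I))

theorem hasSum_clausenKernel (x : ℝ) {t : ℝ} (ht : 0 < t) :
    HasSum (fun n : ℕ ↦ Real.sin ((n + 1) * x) * rexp (-((n + 1) * t))) (clausenKernel x t) := by
  have h := hasSum_im_pow_succ (norm_exp_neg_add_mul_I_lt_one ht x)
  have him : (cexp (-t + x * I)).im = rexp (-t) * Real.sin x := by
    simpa using exp_neg_add_mul_I_pow_im t x 1
  simp only [exp_neg_add_mul_I_pow_im, Nat.cast_add_one, him] at h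
  simpa only [clausenKernel, mul_comm (Real.sin _)] using h

theorem clausenKernel_pos {x t : ℝ} (hx : 0 < Real.sin x) (ht : 0 < t) : 0 < clausenKernel x t := by
  have h1 : 1 - cexp (-t + x * I) ≠ 0 := fun h ↦ by
    simpa [← sub_eq_zero.mp h] using norm_exp_neg_add_mul_I_lt_one ht x
  unfold clausenKernel
  have := normSq_pos.mpr h1
  positivity

theorem summable_abs_sin_div_rpow {s : ℝ} (hs : 1 < s) (x : ℝ) :
    Summable fun n : ℕ ↦ |Real.sin ((n + 1) * x)| / ((n : ℝ) + 1) ^ s := by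
  refine Summable.of_nonneg_of_le (fun n ↦ by positivity) (fun n ↦ ?_)
    ((summable_nat_add_iff 1).mpr (Real.summable_one_div_nat_rpow.mpr hs))
  push_cast
  gcongr
  exact Real.abs_sin_le_one _

theorem stmt_12 (s : ℝ) (hs : 1 < s) (x : ℝ) (hx : x ∈ Set.Ioo 0 Real.pi) :
    0 < ∑' n : ℕ, Real.sin ((n + 1) * x) / ((n : ℝ) + 1) ^ s := by
  have hsin : 0 < Real.sin x := Real.sin_pos_of_pos_of_lt_pi hx.1 hx.2
  have hK := fun t ↦ hasSum_clausenKernel x (t := t)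
  have hsum := summable_abs_sin_div_rpow hs x
  have hs0 : 0 < s := by linarith
  have hpos : 0 < ∫ t in Ioi 0, t ^ (s - 1) * clausenKernel x t :=
    setIntegral_pos_of_forall_pos measurableSet_Ioi (by simp)
      (integrableOn_rpow_mul_of_hasSum_exp hs0 hK hsum) fun t (ht : 0 < t) ↦
        mul_pos (Real.rpow_pos_of_pos ht _) (clausenKernel_pos hsin ht)
  rw [← (hasSum_integral_rpow_mul_of_hasSum_exp hs0 hK hsum).tsum_eq] at hpos
  simp_rw [mul_div_assoc, tsum_mul_left] at hpos
  exact pos_of_mul_pos_right hpos (Real.Gamma_pos_of_pos hs0).le
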